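/- arXiv:2505.06053 — 4 statements merged into one kernel-verified Lean document; each statement's English description precedes it below -/
import Mathlib

section
/- For the function f(x) = ‖x‖₁ on ℝ², with initial point x⁰ = (γ/2, -1) and stepsize γ > 0, the iterates of compressed gradient descent x^{t+1} = x^t - γ·Top1(f'(x^t)), where the subgradient at points with both coordinates nonzero is (sign(x₁), sign(x₂)) and Top-1 selects the first coordinate when entries are equal in absolute value, satisfy x^t = ((-1)^t γ/2, -1) for all t ≥ 0, and hence f(x^t) - min f = 1 + γ/2 for all t ≥ 0. -/
/-- Top-1 compressor on ℝ²: keeps the coordinate with largest absolute value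
(the first one in case of a tie) and zeros the other. -/
noncomputable def top1 (v : ℝ × ℝ) : ℝ × ℝ :=
  if |v.2| > |v.1| then (0, v.2) else (v.1, 0)

/-- The subgradient of f(x) = |x₁| + |x₂| used (valid when both coordinates
are nonzero): componentwise sign. -/
noncomputable def l1subgrad (v : ℝ × ℝ) : ℝ × ℝ :=
  (Real.sign v.1, Real.sign v.2)

/-- f(x) = ‖x‖₁ on ℝ². -/
def l1norm (v : ℝ × ℝ) : ℝ := |v.1| + |v.2|

theorem cgd_nonconvergence (γ : ℝ) (hγ : 0 < γ) (x : ℕ → ℝ × ℝ)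
    (hx0 : x 0 = (γ / 2, -1))
    (hrec : ∀ t, x (t + 1) = x t - γ • top1 (l1subgrad (x t))) :
    ∀ t, x t = ((-1 : ℝ) ^ t * (γ / 2), -1) ∧
      l1norm (x t) - (0 : ℝ) = 1 + γ / 2 := by
  have key : ∀ t, x t = ((-1 : ℝ) ^ t * (γ / 2), -1) := by
    intro t
    induction t with
    | zero => simpa using hx0
    | succ n ih =>
      have hne : ((-1 : ℝ) ^ n * (γ / 2)) ≠ 0 := by positivity
      have hsgn : Real.sign ((-1 : ℝ) ^ n * (γ / 2)) = (-1 : ℝ) ^ n := by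
        rcases Nat.even_or_odd n with h | h
        · rw [h.neg_one_pow, one_mul, Real.sign_of_pos (by positivity)]
        · rw [h.neg_one_pow] at *
          rw [Real.sign_of_neg (by nlinarith)]
      rw [hrec n, ih]
      simp only [l1subgrad, top1, hsgn]
      rw [Real.sign_of_neg (by norm_num)]
      have habs : |(-1 : ℝ)| = |(-1 : ℝ) ^ n| := by
        rcases Nat.even_or_odd n with h | h <;> simp [h.neg_one_pow]
      rw [if_neg (by rw [habs]; exact lt_irrefl _)]
      ext
      · simp [pow_succ]; ring
      · simp
  intro t
  refine ⟨key t, ?_⟩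
  rw [key t, l1norm]
  have : |(-1 : ℝ) ^ t * (γ / 2)| = γ / 2 := by
    rw [abs_mul, abs_pow]
    simp [abs_of_pos (half_pos hγ)]
  simp [this]
  linarith
end

section
/- For the function f(x) = ‖x‖₁ on ℝ², with initial point x⁰ = (γ/2, -1), initial estimator v⁰ = (1,1), and stepsize γ > 0, the EF21 iterates x^{t+1} = x^t - γ v^t, v^{t+1} = v^t + Top1(f'(x^{t+1}) - v^t), satisfy x^t = ((-1)^t γ/2, -1 - tγ) and v^t = ((-1)^t, 1) for all t ≥ 0, hence f(x^t) - min f = 1 + γ/2 + tγ, so EF21 diverges linearly from the optimum. -/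
theorem ef21_divergence (γ : ℝ) (hγ : 0 < γ) (x v : ℕ → ℝ × ℝ)
    (hx0 : x 0 = (γ / 2, -1)) (hv0 : v 0 = (1, 1))
    (hxrec : ∀ t, x (t + 1) = x t - γ • v t)
    (hvrec : ∀ t, v (t + 1) = v t + top1 (l1subgrad (x (t + 1)) - v t)) :
    ∀ t, x t = ((-1 : ℝ) ^ t * (γ / 2), -1 - t * γ) ∧
      v t = ((-1 : ℝ) ^ t, 1) ∧
      l1norm (x t) - (0 : ℝ) = 1 + γ / 2 + t * γ := by
  intro t
  induction t with
  | zero =>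
    refine ⟨by simp [hx0], by simp [hv0], ?_⟩
    simp [l1norm, hx0, abs_of_pos (by linarith : (0:ℝ) < γ/2),
      abs_of_neg (by norm_num : (-1:ℝ) < 0)]
    ring
  | succ t ih =>
    obtain ⟨hxt, hvt, -⟩ := ih
    have hx1 : x (t+1) = ((-1:ℝ)^(t+1) * (γ/2), -1 - (↑(t+1) : ℝ) * γ) := by
      rw [hxrec, hxt, hvt]
      simp only [Prod.smul_mk, Prod.mk_sub_mk, smul_eq_mul, Prod.mk.injEq]
      constructor <;> push_cast <;> ring
    have hsign2 : Real.sign (-1 - (↑(t+1) : ℝ) * γ) = -1 := by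
      apply Real.sign_of_neg
      have : (0:ℝ) ≤ (↑(t+1) : ℝ) := Nat.cast_nonneg _
      nlinarith
    have habs : |(-1:ℝ)^(t+1) * (γ/2)| = γ/2 := by
      rw [abs_mul, abs_pow, abs_neg, abs_one, one_pow, one_mul,
        abs_of_pos (by linarith : (0:ℝ) < γ/2)]
    constructor
    · exact hx1
    constructor
    · rw [hvrec, hx1, hvt]
      simp only [l1subgrad]
      rcases Nat.even_or_odd t with h | h
      · have ht : ((-1:ℝ))^t = 1 := h.neg_one_pow
        have ht1 : ((-1:ℝ))^(t+1) = -1 := by rw [pow_succ, ht]; ring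
        have hs1 : Real.sign ((-1:ℝ)^(t+1) * (γ/2)) = -1 := by
          rw [ht1]; exact Real.sign_of_neg (by nlinarith)
        rw [hs1, hsign2, ht, ht1]
        simp only [Prod.mk_sub_mk, top1]
        norm_num [Prod.ext_iff]
      · have ht : ((-1:ℝ))^t = -1 := h.neg_one_pow
        have ht1 : ((-1:ℝ))^(t+1) = 1 := by rw [pow_succ, ht]; ring
        have hs1 : Real.sign ((-1:ℝ)^(t+1) * (γ/2)) = 1 := by
          rw [ht1]; exact Real.sign_of_pos (by nlinarith)
        rw [hs1, hsign2, ht, ht1]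
        simp only [Prod.mk_sub_mk, top1]
        norm_num [Prod.ext_iff]
    · rw [hx1]
      simp only [l1norm]
      have h2 : |(-1:ℝ) - (↑(t+1) : ℝ) * γ| = 1 + (↑(t+1) : ℝ) * γ := by
        rw [abs_of_neg]
        · ring
        · have : (0:ℝ) ≤ (↑(t+1) : ℝ) := Nat.cast_nonneg _
          nlinarith
      rw [habs, h2]
      push_cast
      ring
end

section
/- Let e_i^{t+1} = e_i^t + h_i^t - C_i(e_i^t + h_i^t) with e_i^0 = 0, where each C_i is a deterministic δ-contractive compressor and ‖h_i^t‖ ≤ M for all t, i. Then for all t ≥ 0 and all i, ‖e_i^t‖² ≤ (4(1-δ)/δ²)·M². -/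
/-- Error-feedback error bound: with `e_i^{t+1} = e_i^t + h_i^t - C_i(e_i^t + h_i^t)`,
`e_i^0 = 0`, deterministic δ-contractive compressors `C_i`, and `‖h_i^t‖ ≤ M`,
one has `‖e_i^t‖² ≤ (4(1-δ)/δ²) M²` for all `t` and `i`. -/
theorem error_feedback_error_bound {d : ℕ} {ι : Type*}
    (δ M : ℝ) (hδ : δ ∈ Set.Ioc (0 : ℝ) 1) (hM : 0 < M)
    (C : ι → (EuclideanSpace ℝ (Fin d) → EuclideanSpace ℝ (Fin d)))
    (hC : ∀ i x, ‖C i x - x‖ ^ 2 ≤ (1 - δ) * ‖x‖ ^ 2)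
    (e h : ι → ℕ → EuclideanSpace ℝ (Fin d))
    (he0 : ∀ i, e i 0 = 0)
    (hh : ∀ i t, ‖h i t‖ ≤ M)
    (herec : ∀ i t, e i (t + 1) = e i t + h i t - C i (e i t + h i t)) :
    ∀ i t, ‖e i t‖ ^ 2 ≤ (4 * (1 - δ) / δ ^ 2) * M ^ 2 := by
  obtain ⟨hδ0, hδ1⟩ := hδ
  have hδ2 : (0:ℝ) < δ ^ 2 := by positivity
  have hc0 : (0:ℝ) ≤ 1 - δ := by linarith
  set s := Real.sqrt (1 - δ) with hs
  have hs0 : 0 ≤ s := Real.sqrt_nonneg _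
  have hs2 : s ^ 2 = 1 - δ := Real.sq_sqrt hc0
  have hs1 : s ≤ 1 - δ / 2 := by
    have h1 : (0:ℝ) ≤ 1 - δ / 2 := by linarith
    nlinarith [sq_nonneg (s - (1 - δ / 2))]
  intro i t
  induction t with
  | zero =>
    rw [he0 i]
    simp only [norm_zero]
    have : (0:ℝ) ≤ 4 * (1 - δ) / δ ^ 2 * M ^ 2 := by positivity
    simpa using this
  | succ t ih =>
    have hnorm : ‖e i (t + 1)‖ = ‖C i (e i t + h i t) - (e i t + h i t)‖ := by
      rw [herec i t, norm_sub_rev]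
    set x := e i t + h i t with hxdef
    have hxle : ‖x‖ ≤ ‖e i t‖ + M :=
      le_trans (norm_add_le _ _) (by linarith [hh i t])
    have hstep : ‖e i (t + 1)‖ ^ 2 ≤ (1 - δ) * ‖x‖ ^ 2 := by
      rw [hnorm]; exact hC i x
    set a := ‖e i t‖ with ha
    have ha0 : 0 ≤ a := norm_nonneg _
    have hx0 : 0 ≤ ‖x‖ := norm_nonneg _
    -- from ih: δ * a ≤ 2 * s * M
    have hda : δ * a ≤ 2 * s * M := by
      have hsq : (δ * a) ^ 2 ≤ (2 * s * M) ^ 2 := by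
        have : a ^ 2 ≤ 4 * (1 - δ) / δ ^ 2 * M ^ 2 := ih
        rw [div_mul_eq_mul_div, le_div_iff₀ hδ2] at this
        nlinarith
      have h2 : 0 ≤ 2 * s * M := by positivity
      exact (pow_le_pow_iff_left₀ (by positivity) h2 two_ne_zero).mp hsq
    have h1 : δ * (s * (a + M)) ≤ 2 * s * M := by nlinarith [mul_le_mul_of_nonneg_left hda hs0, mul_nonneg hs0 hM.le]
    have hkey : ‖e i (t + 1)‖ ^ 2 * δ ^ 2 ≤ 4 * (1 - δ) * M ^ 2 := by
      have h2 : (δ * (s * (a + M))) ^ 2 ≤ (2 * s * M) ^ 2 := by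
        have hl : 0 ≤ δ * (s * (a + M)) := by positivity
        nlinarith
      have h3 : (1 - δ) * ‖x‖ ^ 2 ≤ (1 - δ) * (a + M) ^ 2 :=
        mul_le_mul_of_nonneg_left (pow_le_pow_left₀ hx0 hxle 2) hc0
      calc ‖e i (t + 1)‖ ^ 2 * δ ^ 2 ≤ ((1 - δ) * (a + M) ^ 2) * δ ^ 2 := by
              nlinarith [hstep.trans h3]
        _ = (δ * (s * (a + M))) ^ 2 := by rw [← hs2]; ring
        _ ≤ (2 * s * M) ^ 2 := h2
        _ = 4 * (1 - δ) * M ^ 2 := by rw [← hs2]; ring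
    rw [div_mul_eq_mul_div, le_div_iff₀ hδ2]
    linarith
end

section
/- Under the setting of the previous lemma with x = x* satisfying g(x*) ≤ 0, suppose the stepsize γ and threshold c satisfy (T/2)·γc > (1/2)R² + (1/2)M²γ²T + (2√(1-δ)/δ)M²γ²T, where R ≥ ‖x^0 - x*‖ and C = (2√(1-δ)/δ)M. Then the set B = {t < T : g(x^t) ≤ c} is nonempty, and moreover either |B| ≥ T/2 or Σ_{t∈B}(f(x^t) - f(x*)) ≤ 0. -/
open Finset

/-- If the combined bound
`Σ_{t∈B} γ(f(x^t)-f(x*)) + Σ_{t∈N} γ(c-g(x*)) ≤ ½R² + ½M²γ²T + (2√(1-δ)/δ)M²γ²T`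
holds with `g(x*) ≤ 0` and the stepsize condition
`(T/2)γc > ½R² + ½M²γ²T + (2√(1-δ)/δ)M²γ²T`, then `B = {t < T : g(x^t) ≤ c}`
is nonempty and either `|B| ≥ T/2` or `Σ_{t∈B}(f(x^t)-f(x*)) ≤ 0`. -/
theorem safe_ef_B_nonempty {d : ℕ}
    (f g : EuclideanSpace ℝ (Fin d) → ℝ) (M γ c R δ : ℝ) (T : ℕ)
    (hγ : 0 < γ) (hc : 0 < c) (hM : 0 < M) (hδ : δ ∈ Set.Ioc (0 : ℝ) 1)
    (x : ℕ → EuclideanSpace ℝ (Fin d)) (xstar : EuclideanSpace ℝ (Fin d))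
    (hfeas : g xstar ≤ 0) (hR : ‖x 0 - xstar‖ ≤ R)
    (hbound :
      ∑ t ∈ (range T).filter (fun t => g (x t) ≤ c), γ * (f (x t) - f xstar) +
        ∑ t ∈ (range T).filter (fun t => ¬ g (x t) ≤ c), γ * (c - g xstar) ≤
        (1 / 2) * R ^ 2 + (1 / 2) * M ^ 2 * γ ^ 2 * T +
          (2 * Real.sqrt (1 - δ) / δ) * M ^ 2 * γ ^ 2 * T)
    (hstep : (T : ℝ) / 2 * (γ * c) >
      (1 / 2) * R ^ 2 + (1 / 2) * M ^ 2 * γ ^ 2 * T +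
        (2 * Real.sqrt (1 - δ) / δ) * M ^ 2 * γ ^ 2 * T) :
    ((range T).filter (fun t => g (x t) ≤ c)).Nonempty ∧
      ((((range T).filter (fun t => g (x t) ≤ c)).card : ℝ) ≥ (T : ℝ) / 2 ∨
        ∑ t ∈ (range T).filter (fun t => g (x t) ≤ c), (f (x t) - f xstar) ≤ 0) := by
  set B := (range T).filter (fun t => g (x t) ≤ c) with hB
  set N := (range T).filter (fun t => ¬ g (x t) ≤ c) with hN
  set RHS := (1 / 2) * R ^ 2 + (1 / 2) * M ^ 2 * γ ^ 2 * T +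
      (2 * Real.sqrt (1 - δ) / δ) * M ^ 2 * γ ^ 2 * T with hRHS
  clear_value B N RHS
  have hcard : B.card + N.card = T := by
    rw [hB, hN, card_filter_add_card_filter_not, card_range]
  have hγc : 0 < γ * c := mul_pos hγ hc
  have hNsum : (N.card : ℝ) * (γ * c) ≤ ∑ t ∈ N, γ * (c - g xstar) := by
    rw [Finset.sum_const, nsmul_eq_mul]
    gcongr
    nlinarith
  have hT : 0 < (T : ℝ) := by
    by_contra h
    push_neg at h
    have h0 : (T : ℝ) = 0 := le_antisymm h (Nat.cast_nonneg T)
    have : RHS ≥ 0 := by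
      rw [hRHS]
      have h1δ : 0 ≤ 1 - δ := by linarith [hδ.2]
      have := Real.sqrt_nonneg (1 - δ)
      have hδ0 := hδ.1
      positivity
    rw [h0] at hstep
    simp at hstep
    linarith
  constructor
  · rw [Finset.nonempty_iff_ne_empty]
    intro hBe
    have hBc : B.card = 0 := by rw [hBe]; simp
    have hNT : (N.card : ℝ) = T := by
      rw [hBc] at hcard; simp at hcard; rw [hcard]
    have hsum0 : ∑ t ∈ B, γ * (f (x t) - f xstar) = 0 := by rw [hBe]; simp
    rw [hsum0, zero_add] at hbound
    have h1 : (T : ℝ) * (γ * c) ≤ RHS := by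
      rw [← hNT]; exact hNsum.trans hbound
    nlinarith [mul_pos hT hγc]
  · by_contra hcon
    push_neg at hcon
    obtain ⟨hBlt, hSpos⟩ := hcon
    have hSpos' : 0 < ∑ t ∈ B, γ * (f (x t) - f xstar) := by
      rw [← Finset.mul_sum]; exact mul_pos hγ hSpos
    have hNge : (T : ℝ) / 2 ≤ (N.card : ℝ) := by
      have : (B.card : ℝ) + N.card = T := by exact_mod_cast hcard
      linarith
    have h1 : (N.card : ℝ) * (γ * c) ≤ RHS := by
      calc (N.card : ℝ) * (γ * c) ≤ ∑ t ∈ N, γ * (c - g xstar) := hNsum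
        _ ≤ RHS := by linarith
    nlinarith [mul_le_mul_of_nonneg_right hNge hγc.le]
end
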